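/- Let G be a group generated by a finite set X and suppose G is metabelian, i.e., the commutator subgroup of G is abelian (equivalently, the second derived subgroup of G is trivial). Then there exists n ∈ ℕ such that every element of G is a product of n palindromes over X. -/

import Mathlib

/-- A palindromic word over `X`: a finite list of elements of `X ∪ X⁻¹`
that reads the same forwards and backwards. -/
def IsPalindromicWord {G : Type*} [Group G] (X : Set G) (w : List G) : Prop :=
  (∀ g ∈ w, g ∈ X ∨ g⁻¹ ∈ X) ∧ w.reverse = w

/-- `g` is a product (in order) of the evaluations of `n` palindromic words over `X`. -/
def IsProdOfPalindromes {G : Type*} [Group G] (X : Set G) (n : ℕ) (g : G) : Prop :=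
  ∃ ws : List (List G), ws.length = n ∧ (∀ w ∈ ws, IsPalindromicWord X w) ∧
    (ws.map List.prod).prod = g

/-!
Write `A = [G, G]` and `K = [A, G]`. Every `g` factors as `p * q * k`: `p = ∏ x ^ mₓ` over the
generators (as `G / A` is abelian), `q = ∏ ⁅x ^ mₓᵧ, y⁆` (as `G / K` has class two, so `A / K` is
generated by the images of the `⁅x, y⁆` and `⁅x, y⁆ ^ m ≡ ⁅x ^ m, y⁆`), and `k ∈ K`. Both `p` and
`q` are visibly short products of powers of letters. Since `A` is abelian, `h ↦ ⁅h, x⁆` is a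
homomorphism on `A` with normal image, so `K` is the product of these images over `x ∈ X`. Finally,
if `h ∈ A` is the value of a word `u` and `r` that of the reversed word, then `r ∈ A` commutes
with `x⁻¹ h x`, which gives `⁅h, x⁆ = x * (r x⁻¹ h) * (x⁻¹ h r x⁻¹)⁻¹ * x⁻²`, a product of four
palindromes.
-/
section

open Subgroup
open scoped commutatorElement

variable {G : Type*} [Group G] {X : Set G}

theorem IsPalindromicWord.nil : IsPalindromicWord X ([] : List G) := ⟨by simp, rfl⟩

theorem IsPalindromicWord.sandwich {u v : List G} (hu : ∀ g ∈ u, g ∈ X ∪ X⁻¹)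
    (hv : IsPalindromicWord X v) : IsPalindromicWord X (u.reverse ++ v ++ u) := by
  refine ⟨fun g hg => ?_, by simp [hv.2]⟩
  simp only [List.mem_append, List.mem_reverse] at hg
  rcases hg with (hg | hg) | hg
  exacts [hu g hg, hv.1 g hg, hu g hg]

theorem IsPalindromicWord.map_inv {w : List G} (hw : IsPalindromicWord X w) :
    IsPalindromicWord X (w.map (·⁻¹)) := by
  refine ⟨fun g hg => ?_, by rw [← List.map_reverse, hw.2]⟩
  obtain ⟨y, hy, rfl⟩ := List.mem_map.1 hg
  rw [inv_inv]
  exact (hw.1 y hy).symm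

theorem IsPalindromicWord.prod_map_inv {w : List G} (hw : IsPalindromicWord X w) :
    (w.map (·⁻¹)).prod = w.prod⁻¹ := by
  rw [List.prod_inv_reverse, ← List.map_reverse, hw.2]

namespace IsProdOfPalindromes

theorem one (n : ℕ) : IsProdOfPalindromes X n 1 :=
  ⟨List.replicate n [], by simp, fun w hw => List.eq_of_mem_replicate hw ▸ .nil, by simp⟩

theorem mul {m n : ℕ} {a b : G} (ha : IsProdOfPalindromes X m a)
    (hb : IsProdOfPalindromes X n b) : IsProdOfPalindromes X (m + n) (a * b) := by
  obtain ⟨ws, rfl, hws, rfl⟩ := ha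
  obtain ⟨vs, rfl, hvs, rfl⟩ := hb
  refine ⟨ws ++ vs, by simp, fun w hw => ?_, by simp⟩
  exact (List.mem_append.1 hw).elim (hws w) (hvs w)

theorem mono {m n : ℕ} {a : G} (ha : IsProdOfPalindromes X m a) (hmn : m ≤ n) :
    IsProdOfPalindromes X n a := by
  simpa [Nat.add_sub_cancel' hmn] using ha.mul (one (n - m))

theorem inv {n : ℕ} {a : G} (ha : IsProdOfPalindromes X n a) :
    IsProdOfPalindromes X n a⁻¹ := by
  obtain ⟨ws, rfl, hws, rfl⟩ := ha
  refine ⟨(ws.map (List.map (·⁻¹))).reverse, by simp, fun w hw => ?_, ?_⟩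
  · obtain ⟨v, hv, rfl⟩ := List.mem_map.1 (List.mem_reverse.1 hw)
    exact (hws v hv).map_inv
  · rw [List.prod_inv_reverse, List.map_reverse, List.map_map, List.map_map]
    exact congrArg _ (congrArg _ (List.map_congr_left fun w hw => (hws w hw).prod_map_inv))

theorem list_prod {n : ℕ} {l : List G} (hl : ∀ g ∈ l, IsProdOfPalindromes X n g) :
    IsProdOfPalindromes X (n * l.length) l.prod := by
  induction l with
  | nil => exact one _
  | cons g l ih =>
    simp only [List.forall_mem_cons] at hl
    exact (hl.1.mul (ih hl.2)).mono (by rw [List.length_cons, mul_add_one, add_comm])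

end IsProdOfPalindromes

theorem IsPalindromicWord.isProdOfPalindromes {w : List G} (hw : IsPalindromicWord X w) :
    IsProdOfPalindromes X 1 w.prod :=
  ⟨[w], rfl, by simpa using hw, by simp⟩

theorem isProdOfPalindromes_zpow {x : G} (hx : x ∈ X ∪ X⁻¹) (n : ℤ) :
    IsProdOfPalindromes X 1 (x ^ n) := by
  have hpow (k : ℕ) : IsProdOfPalindromes X 1 (x ^ k) := by
    have hw : IsPalindromicWord X (List.replicate k x) :=
      ⟨fun g hg => List.eq_of_mem_replicate hg ▸ hx, List.reverse_replicate⟩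
    simpa using hw.isProdOfPalindromes
  cases n with
  | ofNat k => simpa using hpow k
  | negSucc k => simpa using (hpow (k + 1)).inv

theorem exists_list_prod_eq_of_closure_eq_top (hgen : closure X = ⊤) (g : G) :
    ∃ w : List G, (∀ y ∈ w, y ∈ X ∪ X⁻¹) ∧ w.prod = g := by
  apply Submonoid.exists_list_of_mem_closure
  rw [← closure_toSubmonoid, hgen]
  exact mem_top g

theorem prod_reverse_mem_commutator_iff (w : List G) :
    w.reverse.prod ∈ commutator G ↔ w.prod ∈ commutator G := by
  simp only [← Abelianization.ker_of, MonoidHom.mem_ker, map_list_prod, List.map_reverse,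
    List.prod_reverse]

theorem commutatorElement_mem_commutator (a b : G) : ⁅a, b⁆ ∈ commutator G :=
  commutator_mem_commutator (mem_top a) (mem_top b)

theorem normal_of_le_center {H : Subgroup G} (hH : H ≤ center G) : H.Normal :=
  ⟨fun n hn g => by rwa [mem_center_iff.1 (hH hn) g, mul_inv_cancel_right]⟩

theorem commutatorElement_mem_of_closure_eq_top {N : Subgroup G} [hN : N.Normal]
    (hgen : closure X = ⊤) {a : G} (ha : ∀ x ∈ X, ⁅a, x⁆ ∈ N) (g : G) : ⁅a, g⁆ ∈ N := by
  induction (hgen ▸ mem_top g : g ∈ closure X) using closure_induction with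
  | mem x hx => exact ha x hx
  | one => simp
  | mul b c _ _ hb hc =>
    rw [commutatorElement_mul_right_eq_mul_conj, mul_assoc _ b, mul_assoc]
    exact mul_mem hb (hN.conj_mem _ hc b)
  | inv b _ hb =>
    rw [commutatorElement_inv_right, ← commutatorElement_inv]
    simpa using hN.conj_mem' _ (inv_mem hb) b

theorem commutator_le_of_closure_eq_top {N : Subgroup G} [N.Normal] (hgen : closure X = ⊤)
    (hX : ∀ x ∈ X, ∀ y ∈ X, ⁅x, y⁆ ∈ N) : commutator G ≤ N := by
  have hleft (x : G) (hx : x ∈ X) (g : G) : ⁅x, g⁆ ∈ N :=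
    commutatorElement_mem_of_closure_eq_top hgen (hX x hx) g
  rw [commutator_def, commutator_le]
  refine fun g _ g' _ => commutatorElement_mem_of_closure_eq_top hgen (fun y hy => ?_) g'
  simpa using inv_mem (hleft y hy g)

theorem closure_image_eq_top {H : Type*} [Group H] {f : G →* H} (hf : Function.Surjective f)
    (hgen : closure X = ⊤) : closure (f '' X) = ⊤ := by
  rw [← MonoidHom.map_closure, hgen, map_top_of_surjective f hf]

theorem exists_list_prod_zpow_eq {H ι : Type*} [Group H] [Fintype ι] {f : ι → H}
    (hf : ∀ i, f i ∈ center H) {h : H} (hh : h ∈ closure (Set.range f)) :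
    ∃ m : ι → ℤ, (Finset.univ.toList.map fun i => f i ^ m i).prod = h := by
  -- the scoped instance makes `center H` a `CommGroup`
  open IsMulCommutative in
  let F : ι → center H := fun i => ⟨f i, hf i⟩
  have hrange : Set.range f = (center H).subtype '' Set.range F := by
    rw [← Set.range_comp]; rfl
  rw [hrange, ← MonoidHom.map_closure] at hh
  obtain ⟨z, hz, rfl⟩ := hh
  obtain ⟨m, rfl⟩ := mem_closure_range_iff_of_fintype.1 hz
  refine ⟨m, ?_⟩
  rw [← Finset.prod_map_toList, map_list_prod, List.map_map]
  rfl

theorem commutatorElement_zpow_left {b : G} (hb : ∀ a : G, ⁅a, b⁆ ∈ center G) (a : G) (n : ℤ) :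
    ⁅a ^ n, b⁆ = ⁅a, b⁆ ^ n := by
  let φ : G →* G := MonoidHom.mk' (fun a : G => ⁅a, b⁆) fun a a' => by
    rw [commutatorElement_mul_left_eq_conj_mul, mem_center_iff.1 (hb a') a,
      mul_inv_cancel_right, mem_center_iff.1 (hb a')]
  exact map_zpow φ a n

section Metabelian

variable [IsMulCommutative (commutator G)]

theorem conj_mul_comm_of_mem_commutator {h : G} (hh : h ∈ commutator G) (a b : G) :
    a * b * h * (a * b)⁻¹ = b * a * h * (b * a)⁻¹ := by
  have hconj : b * a * h * (b * a)⁻¹ ∈ commutator G := Normal.conj_mem inferInstance h hh _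
  calc a * b * h * (a * b)⁻¹ = ⁅a, b⁆ * (b * a * h * (b * a)⁻¹) * ⁅a, b⁆⁻¹ := by
        simp only [commutatorElement_def]; group
    _ = b * a * h * (b * a)⁻¹ := by
      rw [setLike_mul_comm (commutatorElement_mem_commutator a b) hconj, mul_inv_cancel_right]

theorem commutatorElement_mul_left_of_mem_commutator {a : G} (ha : a ∈ commutator G)
    (b x : G) : ⁅a * b, x⁆ = ⁅a, x⁆ * ⁅b, x⁆ := by
  rw [commutatorElement_mul_left_eq_conj_mul,
    setLike_mul_comm ha (commutatorElement_mem_commutator b x), mul_inv_cancel_right,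
    setLike_mul_comm (commutatorElement_mem_commutator b x) (commutatorElement_mem_commutator a x)]

theorem conj_commutatorElement_of_mem_commutator {h : G} (hh : h ∈ commutator G) (g x : G) :
    g * ⁅h, x⁆ * g⁻¹ = ⁅g * h * g⁻¹, x⁆ := by
  calc g * ⁅h, x⁆ * g⁻¹ = g * h * g⁻¹ * (g * x * h⁻¹ * (g * x)⁻¹) := by
        simp only [commutatorElement_def]; group
    _ = g * h * g⁻¹ * (x * g * h⁻¹ * (x * g)⁻¹) := by
      rw [conj_mul_comm_of_mem_commutator (inv_mem hh)]
    _ = ⁅g * h * g⁻¹, x⁆ := by simp only [commutatorElement_def]; group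

def commutatorHom (x : G) : commutator G →* G :=
  MonoidHom.mk' (fun h => ⁅(h : G), x⁆) fun a b =>
    commutatorElement_mul_left_of_mem_commutator a.2 b x

instance (x : G) : (commutatorHom x).range.Normal where
  conj_mem := by
    rintro _ ⟨h, rfl⟩ g
    exact ⟨⟨g * h * g⁻¹, Normal.conj_mem inferInstance _ h.2 g⟩,
      (conj_commutatorElement_of_mem_commutator h.2 g x).symm⟩

theorem isProdOfPalindromes_commutatorElement (hgen : closure X = ⊤) {h x : G}
    (hh : h ∈ commutator G) (hx : x ∈ X ∪ X⁻¹) : IsProdOfPalindromes X 4 ⁅h, x⁆ := by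
  obtain ⟨u, hu, rfl⟩ := exists_list_prod_eq_of_closure_eq_top hgen h
  set r := u.reverse.prod
  have hr : r ∈ commutator G := (prod_reverse_mem_commutator_iff u).2 hh
  have hx₁ : IsPalindromicWord X [x⁻¹] := ⟨by simpa [or_comm] using hx, rfl⟩
  have hu' : ∀ g ∈ u.reverse, g ∈ X ∪ X⁻¹ := fun g hg => hu g (List.mem_reverse.1 hg)
  have p₁ : IsProdOfPalindromes X 1 (r * x⁻¹ * u.prod) := by
    simpa [r, mul_assoc] using (hx₁.sandwich hu).isProdOfPalindromes
  have p₂ : IsProdOfPalindromes X 1 (x⁻¹ * u.prod * r * x⁻¹) := by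
    simpa [r, mul_assoc] using
      ((IsPalindromicWord.nil.sandwich hu').sandwich hx₁.1).isProdOfPalindromes
  have hcomm : r * (x⁻¹ * u.prod * x) = x⁻¹ * u.prod * x * r :=
    setLike_mul_comm hr (Normal.conj_mem' inferInstance _ hh x)
  have key : ⁅u.prod, x⁆ =
      x ^ (1 : ℤ) * (r * x⁻¹ * u.prod) * (x⁻¹ * u.prod * r * x⁻¹)⁻¹ * x ^ (-2 : ℤ) := by
    rw [show x ^ (1 : ℤ) * (r * x⁻¹ * u.prod) * (x⁻¹ * u.prod * r * x⁻¹)⁻¹ * x ^ (-2 : ℤ) =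
        x * (r * (x⁻¹ * u.prod * x)) * r⁻¹ * u.prod⁻¹ * x⁻¹ by group, hcomm]
    simp only [commutatorElement_def]; group
  rw [key]
  exact (((isProdOfPalindromes_zpow hx 1).mul p₁).mul p₂.inv).mul (isProdOfPalindromes_zpow hx _)

end Metabelian

theorem isProdOfPalindromes_of_mem_biSup {ι : Type*} (R : ι → Subgroup G) [∀ i, (R i).Normal]
    {n : ℕ} (s : Finset ι) (hR : ∀ i ∈ s, ∀ g ∈ R i, IsProdOfPalindromes X n g) {g : G}
    (hg : g ∈ ⨆ i ∈ s, R i) : IsProdOfPalindromes X (n * s.card) g := by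
  classical
  induction s using Finset.induction_on generalizing g with
  | empty =>
    rw [(by simpa using hg : g = 1)]
    exact .one _
  | insert i s hi ih =>
    rw [Finset.iSup_insert, mem_sup_of_normal_left] at hg
    obtain ⟨a, ha, b, hb, rfl⟩ := hg
    rw [Finset.card_insert_of_notMem hi, mul_add_one, add_comm]
    exact (hR i (Finset.mem_insert_self i s) a ha).mul
      (ih (fun j hj => hR j (Finset.mem_insert_of_mem hj)) hb)

theorem isProdOfPalindromes_of_mem_commutator_top [IsMulCommutative (commutator G)]
    {s : Finset G} (hgen : closure (s : Set G) = ⊤) {k : G}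
    (hk : k ∈ ⁅commutator G, (⊤ : Subgroup G)⁆) :
    IsProdOfPalindromes (s : Set G) (4 * s.card) k := by
  have hle : ⁅commutator G, (⊤ : Subgroup G)⁆ ≤ ⨆ x ∈ s, (commutatorHom x).range := by
    rw [commutator_le]
    refine fun h hh g _ => commutatorElement_mem_of_closure_eq_top hgen (fun x hx => ?_) g
    exact le_iSup₂ (f := fun x (_ : x ∈ s) => (commutatorHom x).range) x hx ⟨⟨h, hh⟩, rfl⟩
  refine isProdOfPalindromes_of_mem_biSup (fun x => (commutatorHom x).range) s
    (fun x hx _ ⟨h, hg⟩ => ?_) (hle hk)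
  exact hg ▸ isProdOfPalindromes_commutatorElement hgen h.2 (Or.inl hx)

theorem exists_isProdOfPalindromes_map_eq {H ι : Type*} [Group H] [Fintype ι] (φ : G →* H)
    {f : ι → H} (hf : ∀ i, f i ∈ center H) {u : ι → ℤ → G} (hu : ∀ i m, φ (u i m) = f i ^ m)
    {n : ℕ} (hn : ∀ i m, IsProdOfPalindromes X n (u i m)) {h : H}
    (hh : h ∈ closure (Set.range f)) :
    ∃ p, IsProdOfPalindromes X (n * Fintype.card ι) p ∧ φ p = h := by
  obtain ⟨m, rfl⟩ := exists_list_prod_zpow_eq hf hh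
  refine ⟨(Finset.univ.toList.map fun i => u i (m i)).prod, ?_, ?_⟩
  · simpa using IsProdOfPalindromes.list_prod (X := X) (n := n)
      (l := Finset.univ.toList.map fun i => u i (m i)) (by simpa using fun i => hn i (m i))
  · simp only [map_list_prod, List.map_map, Function.comp_def, hu]

theorem exists_isProdOfPalindromes_inv_mul_mem_commutator {s : Finset G}
    (hgen : closure (s : Set G) = ⊤) (g : G) :
    ∃ p, IsProdOfPalindromes (s : Set G) s.card p ∧ p⁻¹ * g ∈ commutator G := by
  have hh : Abelianization.of g ∈ closure (Set.range fun x : s => Abelianization.of (x : G)) := by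
    rw [Set.range_comp', Subtype.range_coe, closure_image_eq_top QuotientGroup.mk_surjective hgen]
    exact mem_top _
  obtain ⟨p, hp, hpg⟩ := exists_isProdOfPalindromes_map_eq (ι := s) Abelianization.of
    (fun _ => mem_center_iff.2 fun _ => mul_comm _ _) (u := fun x m => (x : G) ^ m)
    (fun _ _ => map_zpow _ _ _) (fun x m => isProdOfPalindromes_zpow (Or.inl x.2) m) hh
  refine ⟨p, by simpa using hp, ?_⟩
  rw [← Abelianization.ker_of, MonoidHom.mem_ker, map_mul, map_inv, hpg, inv_mul_cancel]

theorem exists_isProdOfPalindromes_inv_mul_mem_commutator_top {s : Finset G}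
    (hgen : closure (s : Set G) = ⊤) {a : G} (ha : a ∈ commutator G) :
    ∃ q, IsProdOfPalindromes (s : Set G) (4 * (s.card * s.card)) q ∧
      q⁻¹ * a ∈ ⁅commutator G, (⊤ : Subgroup G)⁆ := by
  set N := ⁅commutator G, (⊤ : Subgroup G)⁆
  let φ := QuotientGroup.mk' N
  have hcen (c d : G ⧸ N) : ⁅c, d⁆ ∈ center (G ⧸ N) := by
    obtain ⟨a, rfl⟩ := QuotientGroup.mk'_surjective N c
    obtain ⟨b, rfl⟩ := QuotientGroup.mk'_surjective N d
    refine mem_center_iff.2 fun q => ?_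
    obtain ⟨y, rfl⟩ := QuotientGroup.mk'_surjective N q
    refine (commutatorElement_eq_one_iff_mul_comm.1 ?_).symm
    rw [← map_commutatorElement, ← map_commutatorElement, ← MonoidHom.mem_ker,
      QuotientGroup.ker_mk']
    exact commutator_mem_commutator (commutatorElement_mem_commutator a b) (mem_top y)
  let f : s × s → G ⧸ N := fun p => ⁅φ p.1, φ p.2⁆
  have hZ : commutator (G ⧸ N) ≤ closure (Set.range f) := by
    have : (closure (Set.range f)).Normal :=
      normal_of_le_center ((closure_le _).2 (Set.range_subset_iff.2 fun _ => hcen _ _))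
    refine commutator_le_of_closure_eq_top
      (closure_image_eq_top (QuotientGroup.mk'_surjective N) hgen) ?_
    rintro _ ⟨x, hx, rfl⟩ _ ⟨y, hy, rfl⟩
    exact subset_closure ⟨(⟨x, hx⟩, ⟨y, hy⟩), rfl⟩
  have hφa : φ a ∈ commutator (G ⧸ N) := by
    have := mem_map_of_mem φ ha
    rwa [map_commutator_eq, QuotientGroup.range_mk', ← _root_.commutator_def] at this
  have hpal (x y : s) (m : ℤ) : IsProdOfPalindromes (s : Set G) 4 ⁅(x : G) ^ m, (y : G)⁆ := by
    have hx := isProdOfPalindromes_zpow (X := (s : Set G)) (Or.inl x.2)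
    have hy := isProdOfPalindromes_zpow (X := (s : Set G)) (Or.inl y.2)
    simpa [commutatorElement_def] using (((hx m).mul (hy 1)).mul (hx (-m))).mul (hy (-1))
  obtain ⟨q, hq, hqa⟩ := exists_isProdOfPalindromes_map_eq φ (fun p => hcen _ _)
    (u := fun p m => ⁅(p.1 : G) ^ m, p.2⁆)
    (fun p m => by simp [commutatorElement_zpow_left (fun c => hcen c _)])
    (fun p m => hpal p.1 p.2 m) (hZ hφa)
  refine ⟨q, by simpa using hq, ?_⟩
  rw [← QuotientGroup.ker_mk' N, MonoidHom.mem_ker, map_mul, map_inv, hqa, inv_mul_cancel]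

end

theorem metabelian_finite_palindromic_width {G : Type*} [Group G]
    (X : Set G) (hX : X.Finite) (hgen : Subgroup.closure X = ⊤)
    (hmeta : ∀ a b : G, a ∈ commutator G → b ∈ commutator G → a * b = b * a) :
    ∃ n : ℕ, ∀ g : G, IsProdOfPalindromes X n g := by
  obtain ⟨s, rfl⟩ := hX.exists_finset_coe
  have : IsMulCommutative (commutator G) := .of_setLike_mul_comm fun a ha b hb => hmeta a b ha hb
  refine ⟨s.card + 4 * (s.card * s.card) + 4 * s.card, fun g => ?_⟩
  obtain ⟨p, hp, hpg⟩ := exists_isProdOfPalindromes_inv_mul_mem_commutator hgen g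
  obtain ⟨q, hq, hqa⟩ := exists_isProdOfPalindromes_inv_mul_mem_commutator_top hgen hpg
  have hk := isProdOfPalindromes_of_mem_commutator_top hgen hqa
  simpa [mul_assoc] using (hp.mul hq).mul hk
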